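/- arXiv:2304.06242 — 3 statements merged into one kernel-verified Lean document; each statement's English description precedes it below -/
import Mathlib

section
/- If φ ∈ B*(p), then its normal part φ_n and singular part φ_s (as functionals on the von Neumann algebra B(L²M)) belong to B*(p), with ‖φ_n‖_{B*(p)} ≤ ‖φ‖_{B*(p)} and ‖φ_s‖_{B*(p)} ≤ ‖φ‖_{B*(p)}. -/
/-! A normal functional is carried, up to `ε`, by a finite-rank projection `Q`: with
`Q' = 1 - Q`, both `‖φn S - φn (Q S Q)‖` and `‖φn (Q' S Q')‖` are at most `ε ‖S‖`. As `φs` kills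
the compact operators `Q S Q` and `S - Q' S Q'`, this gives `φn S ≈ φ (Q S Q)` and
`φs S ≈ φ (Q' S Q')`, hence `‖φn‖, ‖φs‖ ≤ ‖φ‖`. The maps `S ↦ φ (x S y)` inherit the
decomposition into a normal and a singular part, and `‖φ‖_{B*(p)}` is the supremum of their norms
over admissible `x, y`. -/

noncomputable section

variable {H : Type*} [NormedAddCommGroup H] [InnerProductSpace ℂ H] [CompleteSpace H]

/-- A standard-form datum for a von Neumann algebra `M ⊆ B(H)`: a unit trace vector `Ω`
which is cyclic for `M` and for its commutant (hence separating), implementing a tracial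
state `τ(x) = ⟨xΩ, Ω⟩` on `M`.  This encodes a tracial von Neumann algebra `(M, τ)`
acting standardly on `H = L²(M, τ)`. -/
structure StandardForm (M : VonNeumannAlgebra H) where
  Ω : H
  norm_Ω : ‖Ω‖ = 1
  tracial : ∀ x ∈ M, ∀ y ∈ M,
    (inner ℂ ((x * y : H →L[ℂ] H) Ω) Ω : ℂ) = inner ℂ ((y * x : H →L[ℂ] H) Ω) Ω
  cyclic : Dense ((fun T : H →L[ℂ] H => T Ω) '' (M : Set (H →L[ℂ] H)))
  cyclic' : Dense ((fun T : H →L[ℂ] H => T Ω) '' (M.commutant : Set (H →L[ℂ] H)))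

variable {M : VonNeumannAlgebra H}

/-- The trace on `B(H)` induced by the trace vector: `τ(T) = ⟨TΩ, Ω⟩`. -/
def SFtrace (sf : StandardForm M) (T : H →L[ℂ] H) : ℂ := inner ℂ (T sf.Ω) sf.Ω

/-- The noncommutative `L^p`-norm `‖x‖_p = τ(|x|^p)^{1/p} = τ((x^*x)^{p/2})^{1/p}`. -/
def pNorm (sf : StandardForm M) (p : ℝ) (x : H →L[ℂ] H) : ℝ :=
  (SFtrace sf (cfc (fun t : ℝ => t ^ (p / 2)) (star x * x))).re ^ (1 / p)

/-- The set of values `‖φ(xTy)‖` over `‖T‖ ≤ 1`, `x, y ∈ M`, `‖x‖_p, ‖y‖_p ≤ 1`,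
whose supremum is `‖φ‖_{B^*(p)}`. -/
def dualSet (sf : StandardForm M) (p : ℝ) (φ : (H →L[ℂ] H) →L[ℂ] ℂ) : Set ℝ :=
  {r | ∃ x ∈ M, ∃ y ∈ M, ∃ T : H →L[ℂ] H,
    ‖T‖ ≤ 1 ∧ pNorm sf p x ≤ 1 ∧ pNorm sf p y ≤ 1 ∧ r = ‖φ (x * T * y)‖}

/-- Membership in `B^*(p)`: the defining supremum `‖φ‖_{B^*(p)}` is finite. -/
def MemBp (sf : StandardForm M) (p : ℝ) (φ : (H →L[ℂ] H) →L[ℂ] ℂ) : Prop :=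
  BddAbove (dualSet sf p φ)

/-- The norm `‖φ‖_{B^*(p)}`. -/
def BpNorm (sf : StandardForm M) (p : ℝ) (φ : (H →L[ℂ] H) →L[ℂ] ℂ) : ℝ :=
  sSup (dualSet sf p φ)

/-- `φ` is a normal functional on `B(H)`: a countable sum of vector functionals with
square-summable coefficients. -/
def IsNormalFunctional (φ : (H →L[ℂ] H) →L[ℂ] ℂ) : Prop :=
  ∃ ξ η : ℕ → H, Summable (fun n => ‖ξ n‖ ^ 2) ∧ Summable (fun n => ‖η n‖ ^ 2) ∧
    ∀ T : H →L[ℂ] H, φ T = ∑' n, (inner ℂ (T (ξ n)) (η n) : ℂ)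

/-- `φ` is a singular functional on `B(H)`: it annihilates the compact operators. -/
def IsSingularFunctional (φ : (H →L[ℂ] H) →L[ℂ] ℂ) : Prop :=
  ∀ T : H →L[ℂ] H, IsCompactOperator ⇑T → φ T = 0

section StarProjection

variable {𝕜 E : Type*} [RCLike 𝕜] [NormedAddCommGroup E] [InnerProductSpace 𝕜 E]
  [CompleteSpace E]

theorem exists_isCompactOperator_isStarProjection_fixing {s : Set E} (hs : s.Finite) :
    ∃ Q : E →L[𝕜] E, IsStarProjection Q ∧ IsCompactOperator Q ∧ ∀ v ∈ s, Q v = v := by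
  set K := Submodule.span 𝕜 s
  have : FiniteDimensional 𝕜 K := FiniteDimensional.span_of_finite 𝕜 hs
  refine ⟨K.starProjection, isStarProjection_starProjection, ?_, fun v hv => ?_⟩
  · exact (isCompactOperator_of_locallyCompactSpace_dom K.orthogonalProjectionOnto).clm_comp
      K.subtypeL
  · exact K.starProjection_eq_self_iff.mpr (Submodule.subset_span hv)

end StarProjection

theorem IsStarProjection.norm_mul_mul_self_le {A : Type*} [NonUnitalNormedRing A] [StarRing A]
    [CStarRing A] {Q : A} (hQ : IsStarProjection Q) (S : A) : ‖Q * S * Q‖ ≤ ‖S‖ :=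
  calc ‖Q * S * Q‖ ≤ ‖Q‖ * ‖S‖ * ‖Q‖ := norm_mul₃_le
    _ ≤ 1 * ‖S‖ * 1 := by gcongr <;> exact hQ.norm_le
    _ = ‖S‖ := by ring

section CompactOperator

variable {𝕜 E : Type*} [NontriviallyNormedField 𝕜] [NormedAddCommGroup E] [NormedSpace 𝕜 E]
  {S : E →L[𝕜] E}

theorem IsCompactOperator.mul_left (x : E →L[𝕜] E) (hS : IsCompactOperator S) :
    IsCompactOperator ⇑(x * S) :=
  hS.clm_comp x

theorem IsCompactOperator.mul_right (x : E →L[𝕜] E) (hS : IsCompactOperator S) :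
    IsCompactOperator ⇑(S * x) :=
  hS.comp_clm x

theorem IsCompactOperator.sub_one_sub_mul_mul_one_sub {Q : E →L[𝕜] E} (hQ : IsCompactOperator Q)
    (S : E →L[𝕜] E) : IsCompactOperator ⇑(S - (1 - Q) * S * (1 - Q)) := by
  have h : S - (1 - Q) * S * (1 - Q) = Q * S + (1 - Q) * S * Q := by noncomm_ring
  rw [h, FunLike.coe_add]
  exact (hQ.mul_right S).add (hQ.mul_left _)

end CompactOperator

section VectorSums

variable {E : Type*} [NormedAddCommGroup E] [InnerProductSpace ℂ E] {a b : ℕ → E}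

theorem summable_norm_sq_map (ha : Summable fun n => ‖a n‖ ^ 2) (A : E →L[ℂ] E) :
    Summable fun n => ‖A (a n)‖ ^ 2 :=
  .of_nonneg_of_le (fun _ => by positivity)
    (fun n => by rw [← mul_pow]; gcongr; exact A.le_opNorm _) (ha.mul_left (‖A‖ ^ 2))

theorem norm_inner_apply_le (S : E →L[ℂ] E) (u v : E) :
    ‖(inner ℂ (S u) v : ℂ)‖ ≤ ‖S‖ * (‖u‖ * ‖v‖) :=
  calc ‖(inner ℂ (S u) v : ℂ)‖ ≤ ‖S u‖ * ‖v‖ := norm_inner_le_norm _ _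
    _ ≤ ‖S‖ * ‖u‖ * ‖v‖ := by gcongr; exact S.le_opNorm u
    _ = ‖S‖ * (‖u‖ * ‖v‖) := mul_assoc _ _ _

theorem summable_inner_apply (hab : Summable fun n => ‖a n‖ * ‖b n‖) (S : E →L[ℂ] E) :
    Summable fun n => (inner ℂ (S (a n)) (b n) : ℂ) :=
  .of_norm_bounded (hab.mul_left ‖S‖) fun _ => norm_inner_apply_le S _ _

theorem norm_tsum_inner_apply_le (hab : Summable fun n => ‖a n‖ * ‖b n‖) (S : E →L[ℂ] E) :
    ‖∑' n, (inner ℂ (S (a n)) (b n) : ℂ)‖ ≤ ‖S‖ * ∑' n, ‖a n‖ * ‖b n‖ := by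
  rw [← tsum_mul_left]
  exact tsum_of_norm_bounded (hab.mul_left ‖S‖).hasSum fun n => norm_inner_apply_le S _ _

end VectorSums

section Functionals

variable {ψ φn φs : (H →L[ℂ] H) →L[ℂ] ℂ}

theorem IsNormalFunctional.comp_mulLeftRight (hψ : IsNormalFunctional ψ) (x y : H →L[ℂ] H) :
    IsNormalFunctional (ψ.comp (ContinuousLinearMap.mulLeftRight ℂ (H →L[ℂ] H) x y)) := by
  obtain ⟨ξ, η, hξ, hη, hψ⟩ := hψ
  refine ⟨fun n => y (ξ n), fun n => (ContinuousLinearMap.adjoint x) (η n),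
    summable_norm_sq_map hξ y, summable_norm_sq_map hη _, fun _ => ?_⟩
  simp only [ContinuousLinearMap.comp_apply, ContinuousLinearMap.mulLeftRight_apply, hψ,
    mul_apply_eq_comp, ContinuousLinearMap.adjoint_inner_right]

theorem IsSingularFunctional.comp_mulLeftRight (hψ : IsSingularFunctional ψ) (x y : H →L[ℂ] H) :
    IsSingularFunctional (ψ.comp (ContinuousLinearMap.mulLeftRight ℂ (H →L[ℂ] H) x y)) :=
  fun _ hS => hψ _ ((hS.mul_left x).mul_right y)

theorem IsNormalFunctional.exists_compression_approx (hψ : IsNormalFunctional ψ) {ε : ℝ}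
    (hε : 0 < ε) : ∃ Q : H →L[ℂ] H, IsStarProjection Q ∧ IsCompactOperator Q ∧
      ∀ S, ‖ψ S - ψ (Q * S * Q)‖ ≤ ε * ‖S‖ ∧ ‖ψ ((1 - Q) * S * (1 - Q))‖ ≤ ε * ‖S‖ := by
  obtain ⟨ξ, η, hξ, hη, hψ⟩ := hψ
  have hξη : Summable fun n => ‖ξ n‖ * ‖η n‖ :=
    Real.summable_mul_of_Lp_Lq_of_nonneg .two_two (fun _ => norm_nonneg _)
      (fun _ => norm_nonneg _) (by simpa [Real.rpow_two] using hξ)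
      (by simpa [Real.rpow_two] using hη)
  obtain ⟨N, hN⟩ : ∃ N, ∑' k, ‖ξ (k + N)‖ * ‖η (k + N)‖ < ε / 2 :=
    ((tendsto_sum_nat_add fun n => ‖ξ n‖ * ‖η n‖).eventually_lt_const (half_pos hε)).exists
  obtain ⟨Q, hQ, hQc, hQfix⟩ := exists_isCompactOperator_isStarProjection_fixing (𝕜 := ℂ)
    (((Set.finite_Iio N).image ξ).union ((Set.finite_Iio N).image η))
  have hQξ : ∀ n < N, Q (ξ n) = ξ n := fun n hn => hQfix _ (.inl ⟨n, hn, rfl⟩)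
  have hQη : ∀ n < N, Q (η n) = η n := fun n hn => hQfix _ (.inr ⟨n, hn, rfl⟩)
  -- `ψ` splits into a finite sum of vector functionals, which only sees `Q`, and a small tail
  set head : (H →L[ℂ] H) → ℂ := fun R => ∑ n ∈ Finset.range N, inner ℂ (R (ξ n)) (η n)
  set tail : (H →L[ℂ] H) → ℂ := fun R => ∑' k, inner ℂ (R (ξ (k + N))) (η (k + N))
  have hsplit : ∀ R, ψ R = head R + tail R := fun R => by
    rw [hψ, (summable_inner_apply hξη R).sum_add_tsum_nat_add]
  have htail : ∀ R, ‖tail R‖ ≤ ε / 2 * ‖R‖ := fun R => by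
    have hsum : Summable fun k => ‖ξ (k + N)‖ * ‖η (k + N)‖ :=
      (summable_nat_add_iff N).mpr hξη
    calc ‖tail R‖ ≤ ‖R‖ * ∑' k, ‖ξ (k + N)‖ * ‖η (k + N)‖ := norm_tsum_inner_apply_le hsum R
      _ ≤ ‖R‖ * (ε / 2) := by gcongr
      _ = ε / 2 * ‖R‖ := mul_comm _ _
  have hhead_compress : ∀ S, head (Q * S * Q) = head S := fun S =>
    Finset.sum_congr rfl fun n hn => by
      have hn := Finset.mem_range.mp hn
      rw [mul_apply_eq_comp, mul_apply_eq_comp, hQξ n hn,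
        ← ContinuousLinearMap.adjoint_inner_right, hQ.isSelfAdjoint.adjoint_eq, hQη n hn]
  have hhead_complement : ∀ S, head ((1 - Q) * S * (1 - Q)) = 0 := fun S =>
    Finset.sum_eq_zero fun n hn => by
      simp [hQξ n (Finset.mem_range.mp hn)]
  refine ⟨Q, hQ, hQc, fun S => ⟨?_, ?_⟩⟩
  · calc ‖ψ S - ψ (Q * S * Q)‖ = ‖tail S - tail (Q * S * Q)‖ := by
          rw [hsplit, hsplit, hhead_compress]; ring_nf
      _ ≤ ε / 2 * ‖S‖ + ε / 2 * ‖S‖ := (norm_sub_le _ _).trans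
          (add_le_add (htail S) ((htail _).trans (by gcongr; exact hQ.norm_mul_mul_self_le S)))
      _ = ε * ‖S‖ := by ring
  · calc ‖ψ ((1 - Q) * S * (1 - Q))‖ ≤ ε / 2 * ‖S‖ := by
          rw [hsplit, hhead_complement, zero_add]
          exact (htail _).trans (by gcongr; exact hQ.one_sub.norm_mul_mul_self_le S)
      _ ≤ ε * ‖S‖ := by gcongr; linarith

theorem IsNormalFunctional.norm_le_norm_add (hn : IsNormalFunctional φn)
    (hs : IsSingularFunctional φs) : ‖φn‖ ≤ ‖φn + φs‖ := by
  refine le_of_forall_pos_le_add fun ε hε => ?_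
  obtain ⟨Q, hQ, hQc, happrox⟩ := hn.exists_compression_approx hε
  refine ContinuousLinearMap.opNorm_le_bound _ (by positivity) fun S => ?_
  have hcompress : φn (Q * S * Q) = (φn + φs) (Q * S * Q) := by
    simp [hs _ ((hQc.mul_right S).mul_right Q)]
  calc ‖φn S‖ ≤ ‖φn S - φn (Q * S * Q)‖ + ‖φn (Q * S * Q)‖ := norm_le_norm_sub_add _ _
    _ = ‖φn S - φn (Q * S * Q)‖ + ‖(φn + φs) (Q * S * Q)‖ := by rw [← hcompress]
    _ ≤ ε * ‖S‖ + ‖φn + φs‖ * ‖S‖ :=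
        add_le_add (happrox S).1
          (((φn + φs).le_opNorm _).trans (by gcongr; exact hQ.norm_mul_mul_self_le S))
    _ = (‖φn + φs‖ + ε) * ‖S‖ := by ring

theorem IsSingularFunctional.norm_le_norm_add (hn : IsNormalFunctional φn)
    (hs : IsSingularFunctional φs) : ‖φs‖ ≤ ‖φn + φs‖ := by
  refine le_of_forall_pos_le_add fun ε hε => ?_
  obtain ⟨Q, hQ, hQc, happrox⟩ := hn.exists_compression_approx hε
  refine ContinuousLinearMap.opNorm_le_bound _ (by positivity) fun S => ?_
  set S' := (1 - Q) * S * (1 - Q)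
  have hφs : φs S = (φn + φs) S' - φn S' := by
    rw [add_apply, add_sub_cancel_left, ← sub_eq_zero, ← map_sub]
    exact hs _ (hQc.sub_one_sub_mul_mul_one_sub S)
  calc ‖φs S‖ ≤ ‖(φn + φs) S'‖ + ‖φn S'‖ := hφs ▸ norm_sub_le _ _
    _ ≤ ‖φn + φs‖ * ‖S‖ + ε * ‖S‖ :=
        add_le_add (((φn + φs).le_opNorm _).trans
          (by gcongr; exact hQ.one_sub.norm_mul_mul_self_le S)) (happrox S).2
    _ = (‖φn + φs‖ + ε) * ‖S‖ := by ring

end Functionals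

section BpNorm

variable {sf : StandardForm M} {p : ℝ} {φ : (H →L[ℂ] H) →L[ℂ] ℂ}

theorem BpNorm_nonneg : 0 ≤ BpNorm sf p φ :=
  Real.sSup_nonneg fun _ ⟨_, _, _, _, _, _, _, _, hr⟩ => hr ▸ norm_nonneg _

theorem norm_comp_mulLeftRight_le_BpNorm (hφ : MemBp sf p φ) {x y : H →L[ℂ] H} (hx : x ∈ M)
    (hy : y ∈ M) (hpx : pNorm sf p x ≤ 1) (hpy : pNorm sf p y ≤ 1) :
    ‖φ.comp (ContinuousLinearMap.mulLeftRight ℂ (H →L[ℂ] H) x y)‖ ≤ BpNorm sf p φ :=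
  ContinuousLinearMap.opNorm_le_of_unit_norm BpNorm_nonneg fun T hT =>
    le_csSup hφ ⟨x, hx, y, hy, T, hT.le, hpx, hpy, rfl⟩

theorem memBp_and_BpNorm_le {c : ℝ} (hc : 0 ≤ c)
    (h : ∀ x ∈ M, ∀ y ∈ M, pNorm sf p x ≤ 1 → pNorm sf p y ≤ 1 →
      ‖φ.comp (ContinuousLinearMap.mulLeftRight ℂ (H →L[ℂ] H) x y)‖ ≤ c) :
    MemBp sf p φ ∧ BpNorm sf p φ ≤ c := by
  have hbound : ∀ r ∈ dualSet sf p φ, r ≤ c := by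
    rintro r ⟨x, hx, y, hy, T, hT, hpx, hpy, rfl⟩
    set L := ContinuousLinearMap.mulLeftRight ℂ (H →L[ℂ] H) x y
    calc ‖φ (x * T * y)‖ ≤ ‖φ.comp L‖ * 1 := (φ.comp L).le_opNorm_of_le hT
      _ ≤ c := by rw [mul_one]; exact h x hx y hy hpx hpy
  exact ⟨⟨c, hbound⟩, Real.sSup_le hbound hc⟩

end BpNorm

theorem Bp_normal_singular_parts_general (sf : StandardForm M) (p : ℝ)
    (φ φn φs : (H →L[ℂ] H) →L[ℂ] ℂ) (hφ : MemBp sf p φ)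
    (hdec : φ = φn + φs) (hn : IsNormalFunctional φn) (hs : IsSingularFunctional φs) :
    (MemBp sf p φn ∧ BpNorm sf p φn ≤ BpNorm sf p φ) ∧
    (MemBp sf p φs ∧ BpNorm sf p φs ≤ BpNorm sf p φ) := by
  subst hdec
  have hparts : ∀ x ∈ M, ∀ y ∈ M, pNorm sf p x ≤ 1 → pNorm sf p y ≤ 1 →
      ‖φn.comp (ContinuousLinearMap.mulLeftRight ℂ (H →L[ℂ] H) x y)‖ ≤ BpNorm sf p (φn + φs) ∧
        ‖φs.comp (ContinuousLinearMap.mulLeftRight ℂ (H →L[ℂ] H) x y)‖ ≤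
          BpNorm sf p (φn + φs) := by
    intro x hx y hy hpx hpy
    have hφxy := norm_comp_mulLeftRight_le_BpNorm hφ hx hy hpx hpy
    rw [ContinuousLinearMap.add_comp] at hφxy
    have hn' := hn.comp_mulLeftRight x y
    have hs' := hs.comp_mulLeftRight x y
    exact ⟨(hn'.norm_le_norm_add hs').trans hφxy, (hs'.norm_le_norm_add hn').trans hφxy⟩
  exact ⟨memBp_and_BpNorm_le BpNorm_nonneg fun x hx y hy hpx hpy =>
      (hparts x hx y hy hpx hpy).1,
    memBp_and_BpNorm_le BpNorm_nonneg fun x hx y hy hpx hpy =>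
      (hparts x hx y hy hpx hpy).2⟩

/-- If `φ ∈ B^*(p)` then its normal and singular parts `φ_n, φ_s`
(the Takesaki decomposition `φ = φ_n + φ_s` with `φ_n` normal and `φ_s` singular)
belong to `B^*(p)`, with `‖φ_n‖_{B^*(p)} ≤ ‖φ‖_{B^*(p)}` and
`‖φ_s‖_{B^*(p)} ≤ ‖φ‖_{B^*(p)}`. -/
theorem Bp_normal_singular_parts (sf : StandardForm M) (p : ℝ) (hp : 2 ≤ p)
    (φ φn φs : (H →L[ℂ] H) →L[ℂ] ℂ) (hφ : MemBp sf p φ)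
    (hdec : φ = φn + φs) (hn : IsNormalFunctional φn) (hs : IsSingularFunctional φs) :
    (MemBp sf p φn ∧ BpNorm sf p φn ≤ BpNorm sf p φ) ∧
    (MemBp sf p φs ∧ BpNorm sf p φs ≤ BpNorm sf p φ) :=
  Bp_normal_singular_parts_general sf p φ φn φs hφ hdec hn hs
end
end

section
/- Let {uₙ}ₙ ⊂ U(M) be unitaries with τ(uₙ*uₘ) = 0 for n ≠ m, let H₀ = closed span{ûₙ} ⊆ L²M, and let E₀(T) denote the operator acting as 0 on H₀^⊥ and diagonally on H₀ by E₀(T)ûₙ = ⟨T ûₙ, ûₙ⟩ ûₙ. Then |||E₀(T)|||_p ≤ |||T|||_p for all T ∈ B(L²M); moreover, if T is diagonal with respect to {ûₙ} and vanishes on H₀^⊥, then |||T|||_p = ‖T‖. -/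
/-!
For `x, y ∈ M` the trace property and unitarity of `uₙ` give `‖y ûₙ‖ = ‖y‖₂` and
`‖x* ûₙ‖ = ‖x‖₂`, and `‖·‖₂ ≤ ‖·‖_p` for `p ≥ 2` (Bernoulli's inequality `q t ≤ t^q + q - 1`
applied under the trace). Hence the vector functional `S ↦ ⟨S ûₙ, ûₙ⟩` lies in the unit ball
of `B*(p)`, so every diagonal entry `|⟨T ûₙ, ûₙ⟩|` is at most `|||T|||_p`. Since `E₀(T)` is
diagonal with respect to an orthonormal family and vanishes off its span, `‖E₀(T)‖` is bounded
by the supremum of these entries. Testing `B*(p)` against `x = y = 1` gives `|||S|||_p ≤ ‖S‖`,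
and both claims follow.
-/

noncomputable section

variable {H : Type*} [NormedAddCommGroup H] [InnerProductSpace ℂ H] [CompleteSpace H]

variable {M : VonNeumannAlgebra H}

/-- The norm `|||T|||_p = sup {|φ(T)| : φ ∈ B^*(p), ‖φ‖_{B^*(p)} ≤ 1}`. -/
def tripNorm (sf : StandardForm M) (p : ℝ) (T : H →L[ℂ] H) : ℝ :=
  sSup {r | ∃ φ : (H →L[ℂ] H) →L[ℂ] ℂ, MemBp sf p φ ∧ BpNorm sf p φ ≤ 1 ∧ r = ‖φ T‖}

open scoped InnerProductSpace

lemma smul_le_cfc_rpow_add_algebraMap {A : Type*} [CStarAlgebra A] [PartialOrder A]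
    [StarOrderedRing A] {a : A} (ha : 0 ≤ a) {q : ℝ} (hq : 1 ≤ q) :
    q • a ≤ cfc (fun t : ℝ => t ^ q) a + algebraMap ℝ A (q - 1) := by
  have hbernoulli : ∀ t ∈ spectrum ℝ a, q * t ≤ t ^ q + (q - 1) := fun t ht => by
    have := one_add_mul_self_le_rpow_one_add (s := t - 1)
      (by linarith [spectrum_nonneg_of_nonneg ha ht]) hq
    rw [add_sub_cancel] at this
    linarith
  have hcont : ContinuousOn (fun t : ℝ => t ^ q) (spectrum ℝ a) := fun t _ =>
    (Real.continuousAt_rpow_const t q (Or.inr (by linarith))).continuousWithinAt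
  calc q • a = cfc (fun t : ℝ => q * t) a := by
        rw [cfc_const_mul q _ a, cfc_id' ℝ a]
    _ ≤ cfc (fun t : ℝ => t ^ q + (q - 1)) a := cfc_mono hbernoulli
    _ = cfc (fun t : ℝ => t ^ q) a + algebraMap ℝ A (q - 1) := by
        rw [cfc_add a _ (fun _ => q - 1), cfc_const (q - 1) a]

section StandardForm

variable (sf : StandardForm M)

lemma SFtrace_sub (a b : H →L[ℂ] H) : SFtrace sf (a - b) = SFtrace sf a - SFtrace sf b :=
  inner_sub_left ..

lemma SFtrace_add (a b : H →L[ℂ] H) : SFtrace sf (a + b) = SFtrace sf a + SFtrace sf b :=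
  inner_add_left ..

lemma SFtrace_real_smul (q : ℝ) (a : H →L[ℂ] H) : SFtrace sf (q • a) = q * SFtrace sf a :=
  inner_smul_real_left ..

lemma SFtrace_algebraMap (q : ℝ) : SFtrace sf (algebraMap ℝ (H →L[ℂ] H) q) = q := by
  simp [SFtrace, Algebra.algebraMap_eq_smul_one, inner_self_eq_norm_sq_to_K, sf.norm_Ω]

lemma SFtrace_one : SFtrace sf 1 = 1 := by
  simpa using SFtrace_algebraMap sf 1

lemma re_SFtrace_star_mul_self (y : H →L[ℂ] H) :
    (SFtrace sf (star y * y)).re = ‖y sf.Ω‖ ^ 2 := by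
  rw [SFtrace, mul_apply_eq_comp, ContinuousLinearMap.star_eq_adjoint,
    ContinuousLinearMap.adjoint_inner_left, norm_sq_eq_re_inner (𝕜 := ℂ)]
  rfl

lemma re_SFtrace_nonneg {a : H →L[ℂ] H} (ha : 0 ≤ a) : 0 ≤ (SFtrace sf a).re :=
  ((ContinuousLinearMap.nonneg_iff_isPositive a).1 ha).re_inner_nonneg_left sf.Ω

lemma re_SFtrace_mono {a b : H →L[ℂ] H} (hab : a ≤ b) :
    (SFtrace sf a).re ≤ (SFtrace sf b).re := by
  have := re_SFtrace_nonneg sf (sub_nonneg.mpr hab)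
  rwa [SFtrace_sub, Complex.sub_re, sub_nonneg] at this

lemma re_SFtrace_le_one_of_re_SFtrace_rpow_le_one {a : H →L[ℂ] H} (ha : 0 ≤ a) {q : ℝ}
    (hq : 1 ≤ q) (h : (SFtrace sf (cfc (fun t : ℝ => t ^ q) a)).re ≤ 1) :
    (SFtrace sf a).re ≤ 1 := by
  have := re_SFtrace_mono sf (smul_le_cfc_rpow_add_algebraMap ha hq)
  rw [SFtrace_real_smul, SFtrace_add, SFtrace_algebraMap, Complex.re_ofReal_mul,
    Complex.add_re, Complex.ofReal_re] at this
  nlinarith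

lemma norm_apply_Ω_le_one_of_pNorm_le_one {p : ℝ} (hp : 2 ≤ p) {y : H →L[ℂ] H}
    (hy : pNorm sf p y ≤ 1) : ‖y sf.Ω‖ ≤ 1 := by
  have hrpow : (SFtrace sf (cfc (fun t : ℝ => t ^ (p / 2)) (star y * y))).re ≤ 1 :=
    not_lt.1 fun h => (Real.one_lt_rpow h (by positivity)).not_ge hy
  have := re_SFtrace_le_one_of_re_SFtrace_rpow_le_one sf (star_mul_self_nonneg y)
    (by linarith) hrpow
  rw [re_SFtrace_star_mul_self] at this
  exact (pow_le_one_iff_of_nonneg (norm_nonneg _) two_ne_zero).1 this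

lemma norm_apply_Ω_eq_of_SFtrace_eq {y z : H →L[ℂ] H}
    (h : SFtrace sf (star y * y) = SFtrace sf (star z * z)) : ‖y sf.Ω‖ = ‖z sf.Ω‖ := by
  have := congrArg Complex.re h
  rw [re_SFtrace_star_mul_self, re_SFtrace_star_mul_self] at this
  exact (sq_eq_sq₀ (norm_nonneg _) (norm_nonneg _)).1 this

lemma norm_star_apply_Ω {z : H →L[ℂ] H} (hz : z ∈ M) : ‖star z sf.Ω‖ = ‖z sf.Ω‖ := by
  refine norm_apply_Ω_eq_of_SFtrace_eq sf ?_
  rw [star_star]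
  exact sf.tracial z hz (star z) (star_mem hz)

lemma norm_apply_apply_Ω {z w : H →L[ℂ] H} (hz : z ∈ M) (hw : w ∈ M) (hw' : w * star w = 1) :
    ‖z (w sf.Ω)‖ = ‖z sf.Ω‖ := by
  refine norm_apply_Ω_eq_of_SFtrace_eq sf (y := z * w) ?_
  calc SFtrace sf (star (z * w) * (z * w)) = SFtrace sf ((star w * (star z * z)) * w) := by
        simp only [star_mul, mul_assoc]
    _ = SFtrace sf (w * (star w * (star z * z))) :=
        sf.tracial _ (mul_mem (star_mem hw) (mul_mem (star_mem hz) hz)) w hw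
    _ = SFtrace sf (star z * z) := by rw [← mul_assoc, hw', one_mul]

lemma orthonormal_apply_Ω {ι : Type*} {u : ι → H →L[ℂ] H} (hu : ∀ i, star (u i) * u i = 1)
    (horth : ∀ i j, i ≠ j → SFtrace sf (star (u j) * u i) = 0) :
    Orthonormal ℂ fun i => u i sf.Ω := by
  classical
  refine orthonormal_iff_ite.2 fun i j => ?_
  have hinner : ⟪u i sf.Ω, u j sf.Ω⟫_ℂ = SFtrace sf (star (u j) * u i) := by
    rw [SFtrace, mul_apply_eq_comp, ContinuousLinearMap.star_eq_adjoint,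
      ContinuousLinearMap.adjoint_inner_left]
  split_ifs with hij
  · rw [hinner, hij, hu, SFtrace_one]
  · rw [hinner, horth i j hij]

lemma pNorm_one (p : ℝ) : pNorm sf p 1 = 1 := by
  rw [pNorm, star_one, one_mul, cfc_apply_one, Real.one_rpow, SFtrace_algebraMap,
    Complex.ofReal_re, Real.one_rpow]

end StandardForm

section Bp

variable (sf : StandardForm M)

lemma norm_apply_le_of_BpNorm_le_one {p : ℝ} {φ : (H →L[ℂ] H) →L[ℂ] ℂ} (hφ : MemBp sf p φ)
    (hφ1 : BpNorm sf p φ ≤ 1) (S : H →L[ℂ] H) : ‖φ S‖ ≤ ‖S‖ := by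
  rcases eq_or_ne S 0 with rfl | hS
  · simp
  have hS0 : 0 < ‖S‖ := norm_pos_iff.mpr hS
  have hmem : ‖φ (‖S‖⁻¹ • S)‖ ∈ dualSet sf p φ :=
    ⟨1, one_mem M, 1, one_mem M, ‖S‖⁻¹ • S,
      by rw [norm_smul, norm_inv, norm_norm, inv_mul_cancel₀ hS0.ne'],
      (pNorm_one sf p).le, (pNorm_one sf p).le, by rw [one_mul, mul_one]⟩
  have := (le_csSup hφ hmem).trans hφ1
  rwa [φ.map_smul_of_tower, norm_smul, norm_inv, norm_norm, inv_mul_le_iff₀ hS0, mul_one] at this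

lemma norm_apply_le_tripNorm {p : ℝ} {φ : (H →L[ℂ] H) →L[ℂ] ℂ} (hφ : MemBp sf p φ)
    (hφ1 : BpNorm sf p φ ≤ 1) (T : H →L[ℂ] H) : ‖φ T‖ ≤ tripNorm sf p T :=
  le_csSup ⟨‖T‖, by
    rintro r ⟨ψ, hψ, hψ1, rfl⟩
    exact norm_apply_le_of_BpNorm_le_one sf hψ hψ1 T⟩ ⟨φ, hφ, hφ1, rfl⟩

lemma tripNorm_le_norm (p : ℝ) (T : H →L[ℂ] H) : tripNorm sf p T ≤ ‖T‖ :=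
  Real.sSup_le (by
    rintro r ⟨φ, hφ, hφ1, rfl⟩
    exact norm_apply_le_of_BpNorm_le_one sf hφ hφ1 T) (norm_nonneg T)

end Bp

section VectorFunctional

variable {E : Type*} [NormedAddCommGroup E] [InnerProductSpace ℂ E]

def vectorFunctional (e : E) : (E →L[ℂ] E) →L[ℂ] ℂ :=
  (innerSL ℂ e).comp (ContinuousLinearMap.apply ℂ E e)

@[simp]
lemma vectorFunctional_apply (e : E) (S : E →L[ℂ] E) : vectorFunctional e S = ⟪e, S e⟫_ℂ :=
  rfl

end VectorFunctional

section UnitaryVectorFunctional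

variable (sf : StandardForm M) {p : ℝ} {w : H →L[ℂ] H}

lemma le_one_of_mem_dualSet_vectorFunctional (hp : 2 ≤ p) (hw : w ∈ M) (hw' : w * star w = 1) :
    ∀ r ∈ dualSet sf p (vectorFunctional (w sf.Ω)), r ≤ 1 := by
  rintro r ⟨x, hx, y, hy, S, hS, hxp, hyp, rfl⟩
  have hx1 : ‖star x (w sf.Ω)‖ ≤ 1 := by
    rw [norm_apply_apply_Ω sf (star_mem hx) hw hw', norm_star_apply_Ω sf hx]
    exact norm_apply_Ω_le_one_of_pNorm_le_one sf hp hxp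
  have hy1 : ‖y (w sf.Ω)‖ ≤ 1 := by
    rw [norm_apply_apply_Ω sf hy hw hw']
    exact norm_apply_Ω_le_one_of_pNorm_le_one sf hp hyp
  calc ‖vectorFunctional (w sf.Ω) (x * S * y)‖
      = ‖⟪star x (w sf.Ω), S (y (w sf.Ω))⟫_ℂ‖ := by
        rw [vectorFunctional_apply, mul_apply_eq_comp, mul_apply_eq_comp,
          ContinuousLinearMap.star_eq_adjoint, ContinuousLinearMap.adjoint_inner_left]
    _ ≤ ‖star x (w sf.Ω)‖ * (‖S‖ * ‖y (w sf.Ω)‖) :=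
        (norm_inner_le_norm _ _).trans (by gcongr; exact S.le_opNorm _)
    _ ≤ 1 * (1 * 1) := by gcongr
    _ = 1 := by norm_num

lemma norm_inner_apply_le_tripNorm (hp : 2 ≤ p) (hw : w ∈ M) (hw' : w * star w = 1)
    (T : H →L[ℂ] H) :
    ‖⟪T (w sf.Ω), w sf.Ω⟫_ℂ‖ ≤ tripNorm sf p T := by
  have hle := le_one_of_mem_dualSet_vectorFunctional sf hp hw hw'
  rw [norm_inner_symm]
  exact norm_apply_le_tripNorm sf ⟨1, hle⟩ (Real.sSup_le hle zero_le_one) T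

end UnitaryVectorFunctional

section DiagonalOperator

variable {𝕜 E ι : Type*} [RCLike 𝕜] [NormedAddCommGroup E] [InnerProductSpace 𝕜 E]
  {e : ι → E} {D : E →L[𝕜] E} {d : ι → 𝕜} {C : ℝ}

lemma norm_apply_le_of_mem_span_of_apply_eq_smul (he : Orthonormal 𝕜 e)
    (hD : ∀ i, D (e i) = d i • e i) (hdC : ∀ i, ‖d i‖ ≤ C) (hC : 0 ≤ C) {η : E}
    (hη : η ∈ Submodule.span 𝕜 (Set.range e)) : ‖D η‖ ≤ C * ‖η‖ := by
  obtain ⟨c, rfl⟩ := Finsupp.mem_span_range_iff_exists_finsupp.1 hη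
  have hnorm_sq (l : ι → 𝕜) : ‖∑ i ∈ c.support, l i • e i‖ ^ 2 = ∑ i ∈ c.support, ‖l i‖ ^ 2 := by
    simpa using he.orthogonalFamily.norm_sum l c.support
  have hDsum : D (c.sum fun i a => a • e i) = ∑ i ∈ c.support, (c i * d i) • e i := by
    simp [Finsupp.sum, map_sum, hD, smul_smul]
  refine (pow_le_pow_iff_left₀ (norm_nonneg _) (by positivity) two_ne_zero).1 ?_
  rw [hDsum, Finsupp.sum, mul_pow, hnorm_sq, hnorm_sq, Finset.mul_sum]
  refine Finset.sum_le_sum fun i _ => ?_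
  rw [norm_mul, mul_pow, mul_comm]
  gcongr
  exact hdC i

lemma norm_le_of_apply_eq_smul_of_apply_eq_zero [CompleteSpace E] (he : Orthonormal 𝕜 e)
    (hD : ∀ i, D (e i) = d i • e i) (hD0 : ∀ ζ, (∀ i, ⟪e i, ζ⟫_𝕜 = 0) → D ζ = 0)
    (hdC : ∀ i, ‖d i‖ ≤ C) (hC : 0 ≤ C) : ‖D‖ ≤ C := by
  set K := (Submodule.span 𝕜 (Set.range e)).topologicalClosure
  have : CompleteSpace K :=
    (Submodule.span 𝕜 (Set.range e)).isClosed_topologicalClosure.completeSpace_coe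
  have hK : ∀ η ∈ K, ‖D η‖ ≤ C * ‖η‖ := by
    have hclosed : IsClosed {η | ‖D η‖ ≤ C * ‖η‖} := isClosed_le (by fun_prop) (by fun_prop)
    intro η hη
    rw [← SetLike.mem_coe, Submodule.topologicalClosure_coe] at hη
    exact closure_minimal
      (fun η hη => norm_apply_le_of_mem_span_of_apply_eq_smul he hD hdC hC hη) hclosed hη
  refine D.opNorm_le_bound hC fun ζ => ?_
  have hperp : D (ζ - K.starProjection ζ) = 0 := hD0 _ fun i =>
    (K.mem_orthogonal _).1 (K.sub_starProjection_mem_orthogonal ζ) (e i)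
      (Submodule.le_topologicalClosure _ (Submodule.subset_span ⟨i, rfl⟩))
  rw [map_sub, sub_eq_zero] at hperp
  calc ‖D ζ‖ = ‖D (K.starProjection ζ)‖ := by rw [hperp]
    _ ≤ C * ‖K.starProjection ζ‖ := hK _ (K.starProjection_apply_mem ζ)
    _ ≤ C * ‖ζ‖ := by gcongr; exact K.norm_starProjection_apply_le ζ

end DiagonalOperator

/-- Let `uₙ ∈ U(M)` be unitaries with `τ(uₙ^* uₘ) = 0` for `n ≠ m`,
and let `D = E₀(T)` be the operator vanishing on the orthocomplement of
`H₀ = span {ûₙ}` and diagonal on `H₀` with `D ûₙ = ⟨T ûₙ, ûₙ⟩ ûₙ`. Then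
`|||E₀(T)|||_p ≤ |||T|||_p`; moreover if `T` is itself such a diagonal operator
(`T = E₀(T)`), then `|||T|||_p = ‖T‖`. -/
theorem tripNorm_diagonal (sf : StandardForm M) (p : ℝ) (hp : 2 ≤ p)
    (u : ℕ → H →L[ℂ] H) (huM : ∀ n, u n ∈ M)
    (huU : ∀ n, star (u n) * u n = 1 ∧ u n * star (u n) = 1)
    (horth : ∀ m n : ℕ, m ≠ n → SFtrace sf (star (u n) * u m) = 0)
    (T D : H →L[ℂ] H)
    (hD1 : ∀ n, D ((u n) sf.Ω) =
      (inner ℂ (T ((u n) sf.Ω)) ((u n) sf.Ω) : ℂ) • ((u n) sf.Ω))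
    (hD0 : ∀ ζ : H, (∀ n, (inner ℂ ((u n) sf.Ω) ζ : ℂ) = 0) → D ζ = 0) :
    tripNorm sf p D ≤ tripNorm sf p T ∧ (T = D → tripNorm sf p T = ‖T‖) := by
  have he : Orthonormal ℂ fun n => u n sf.Ω := orthonormal_apply_Ω sf (fun n => (huU n).1) horth
  have hdiag (n : ℕ) : ‖⟪T (u n sf.Ω), u n sf.Ω⟫_ℂ‖ ≤ tripNorm sf p T :=
    norm_inner_apply_le_tripNorm sf hp (huM n) (huU n).2 T
  have hDT : ‖D‖ ≤ tripNorm sf p T :=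
    norm_le_of_apply_eq_smul_of_apply_eq_zero he hD1 hD0 hdiag ((norm_nonneg _).trans (hdiag 0))
  refine ⟨(tripNorm_le_norm sf p D).trans hDT, fun hTD => ?_⟩
  rw [← hTD] at hDT
  exact (tripNorm_le_norm sf p T).antisymm hDT
end
end

section
/- Let B ⊆ eMe be a diffuse von Neumann subalgebra and σ: B → fMf a unital faithful *-homomorphism, for nonzero projections e, f ∈ M. If K ∈ qK_M (the q_M-closure of the compact operators K(L²M) in B(L²M)) satisfies Kb = σ(b)K for all b ∈ B, then K = (1-f)K(1-e). -/
noncomputable section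

variable {H : Type*} [NormedAddCommGroup H] [InnerProductSpace ℂ H] [CompleteSpace H]

variable {M : VonNeumannAlgebra H}

/-- `e` is an orthogonal projection. -/
def IsProjection (e : H →L[ℂ] H) : Prop := IsSelfAdjoint e ∧ e * e = e

/-- The `τ`-rank completion `qK_M` of the compact operators `K(L²M)` in `B(L²M)`:
`T ∈ qK_M` iff there are uniformly bounded compact operators `Kₙ` and projections
`qₙ ∈ M` with `τ(1-qₙ) → 0` and `‖qₙ(T-Kₙ)qₙ‖ → 0`. -/
def qK (sf : StandardForm M) : Set (H →L[ℂ] H) :=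
  {T | ∃ (K : ℕ → H →L[ℂ] H) (q : ℕ → H →L[ℂ] H) (c : ℝ),
    (∀ n, IsCompactOperator ⇑(K n)) ∧ (∀ n, ‖K n‖ ≤ c) ∧
    (∀ n, q n ∈ M ∧ IsProjection (q n)) ∧
    Filter.Tendsto (fun n => (SFtrace sf (1 - q n)).re) Filter.atTop (nhds 0) ∧
    Filter.Tendsto (fun n => ‖q n * (T - K n) * q n‖) Filter.atTop (nhds 0)}


/-!
Take a Haar unitary `u` of `B` and put `w = σ(u)`. Intertwining gives
`⟨fK(xΩ), yΩ⟩ = ⟨K(uⁿxΩ), wⁿyΩ⟩` for every `n` and all `x, y ∈ M`. Since the `τ(uᵏ)` vanish, the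
vectors `uⁿΩ` are orthogonal of equal length, so `uⁿxΩ → 0` weakly. An element of `qK_M` pairs
such a weakly null sequence with a bounded sequence `zₙΩ`, `zₙ ∈ M`, to a null sequence: cut
with the projections `qₘ`, whose complements are small in `L²` by traciality, and use that the
compact `qₘKₘqₘ` sends weakly null sequences to norm null ones. Hence `fK = 0`, and then
`Ke = σ(e)K = fK = 0`.
-/

open Filter Topology
open scoped InnerProductSpace

lemma isProjection_iff_isStarProjection {p : H →L[ℂ] H} : IsProjection p ↔ IsStarProjection p :=
  ⟨fun h => ⟨h.2, h.1⟩, fun h => ⟨h.2, h.1⟩⟩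

section Monoid

variable {A : Type*} [Monoid A]

lemma IsIdempotentElem.mul_eq_of_mul_mul_eq {e b : A} (he : IsIdempotentElem e)
    (h : e * b * e = b) : e * b = b := by
  rw [← h, ← mul_assoc, ← mul_assoc, he.eq]

variable [StarMul A]

lemma star_pow_mul_pow_eq_of_star_mul_eq {u e : A} (hu : star u * u = e) (heu : e * u = u)
    (n : ℕ) : star (u ^ (n + 1)) * u ^ (n + 1) = e := by
  induction n with
  | zero => simpa using hu
  | succ n ih =>
    rw [pow_succ' u (n + 1), star_mul, mul_assoc, ← mul_assoc (star u), hu, pow_succ',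
      ← mul_assoc e, heu, ← pow_succ', ih]

lemma star_pow_mul_pow_add_eq {u e : A} (hu : star u * u = e) (heu : e * u = u) (m k : ℕ) :
    star (u ^ (m + 1)) * u ^ (m + 1 + (k + 1)) = u ^ (k + 1) := by
  rw [pow_add u (m + 1), ← mul_assoc, star_pow_mul_pow_eq_of_star_mul_eq hu heu, pow_succ',
    ← mul_assoc, heu]

end Monoid

section CStarRing

variable {A : Type*} [NormedRing A] [StarRing A] [CStarRing A]

lemma norm_le_one_of_star_mul_self_eq {a p : A} (hp : IsStarProjection p)
    (ha : star a * a = p) : ‖a‖ ≤ 1 := by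
  have h := CStarRing.norm_star_mul_self (x := a)
  rw [ha] at h
  nlinarith [hp.norm_le, norm_nonneg a]

lemma norm_pow_succ_mul_le {u e : A} (he : IsStarProjection e) (hue : star u * u = e)
    (heu : e * u = u) (n : ℕ) (x : A) : ‖u ^ (n + 1) * x‖ ≤ ‖x‖ :=
  calc ‖u ^ (n + 1) * x‖ ≤ ‖u ^ (n + 1)‖ * ‖x‖ := norm_mul_le _ _
    _ ≤ 1 * ‖x‖ := by
        gcongr
        exact norm_le_one_of_star_mul_self_eq he (star_pow_mul_pow_eq_of_star_mul_eq hue heu n)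
    _ = ‖x‖ := one_mul _

end CStarRing

lemma tendsto_zero_of_norm_le_add {E : Type*} [SeminormedAddCommGroup E] {v : ℕ → E}
    {a : ℕ → ℝ} {b : ℕ → ℕ → ℝ} (hv : ∀ m n, ‖v n‖ ≤ a m + b m n)
    (ha : Tendsto a atTop (𝓝 0)) (hb : ∀ m, Tendsto (b m) atTop (𝓝 0)) :
    Tendsto v atTop (𝓝 0) := by
  rw [NormedAddGroup.tendsto_nhds_zero]
  intro ε hε
  obtain ⟨m, hm⟩ := (ha.eventually (gt_mem_nhds (half_pos hε))).exists
  filter_upwards [(hb m).eventually (gt_mem_nhds (half_pos hε))] with n hn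
  linarith [hv m n]

section InnerProductSpace

variable {𝕜 E : Type*} [RCLike 𝕜] [NormedAddCommGroup E] [InnerProductSpace 𝕜 E]

lemma tendsto_inner_zero_of_dense {ξ : ℕ → E} {R : ℝ} (hξ : ∀ n, ‖ξ n‖ ≤ R) {S : Set E}
    (hS : Dense S) (h : ∀ η ∈ S, Tendsto (fun n => ⟪ξ n, η⟫_𝕜) atTop (𝓝 0)) (η : E) :
    Tendsto (fun n => ⟪ξ n, η⟫_𝕜) atTop (𝓝 0) := by
  obtain ⟨η', hη'S, hη'⟩ := mem_closure_iff_seq_limit.mp (hS η)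
  refine tendsto_zero_of_norm_le_add (a := fun m => R * ‖η - η' m‖)
    (b := fun m n => ‖⟪ξ n, η' m⟫_𝕜‖) (fun m n => ?_) ?_ fun m => ?_
  · calc ‖⟪ξ n, η⟫_𝕜‖ = ‖⟪ξ n, η - η' m⟫_𝕜 + ⟪ξ n, η' m⟫_𝕜‖ := by
          rw [← inner_add_right, sub_add_cancel]
      _ ≤ ‖ξ n‖ * ‖η - η' m‖ + ‖⟪ξ n, η' m⟫_𝕜‖ :=
          (norm_add_le _ _).trans (add_le_add_left (norm_inner_le_norm _ _) _)
      _ ≤ R * ‖η - η' m‖ + ‖⟪ξ n, η' m⟫_𝕜‖ := by gcongr; exact hξ n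
  · simpa using (((tendsto_const_nhds (x := η)).sub hη').norm).const_mul R
  · simpa using (h _ (hη'S m)).norm

lemma tendsto_inner_zero_of_orthogonal {v : ℕ → E} {c : ℝ} (hv : ∀ n, ‖v n‖ = c)
    (horth : Pairwise fun i j => ⟪v i, v j⟫_𝕜 = 0) (η : E) :
    Tendsto (fun n => ⟪v n, η⟫_𝕜) atTop (𝓝 0) := by
  rcases eq_or_ne c 0 with rfl | hc
  · simp [fun n => norm_eq_zero.mp (hv n)]
  have hon : Orthonormal 𝕜 fun n => ((c : 𝕜)⁻¹) • v n := by
    refine ⟨fun n => ?_, fun i j hij => ?_⟩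
    · rw [norm_smul, hv, norm_inv, RCLike.norm_ofReal, ← hv n, abs_norm,
        inv_mul_cancel₀ (hv n ▸ hc)]
    · simp [inner_smul_left, inner_smul_right, horth hij]
  have hsq := (hon.inner_products_summable η).tendsto_atTop_zero
  have : Tendsto (fun n => ⟪((c : 𝕜)⁻¹) • v n, η⟫_𝕜) atTop (𝓝 0) := by
    rw [tendsto_zero_iff_norm_tendsto_zero]
    simpa using hsq.sqrt
  simpa [inner_smul_left, hc] using this.const_mul (c : 𝕜)

variable [CompleteSpace E]

lemma IsCompactOperator.tendsto_apply_zero_of_weakly {F : Type*} [NormedAddCommGroup F]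
    [InnerProductSpace 𝕜 F] [CompleteSpace F] {C : E →L[𝕜] F} (hC : IsCompactOperator C)
    {ξ : ℕ → E} {R : ℝ} (hξ : ∀ n, ‖ξ n‖ ≤ R)
    (hweak : ∀ η, Tendsto (fun n => ⟪ξ n, η⟫_𝕜) atTop (𝓝 0)) :
    Tendsto (fun n => C (ξ n)) atTop (𝓝 0) := by
  have hK : IsCompact (closure ((C : E →ₗ[𝕜] F) '' Metric.closedBall 0 R)) :=
    hC.isCompact_closure_image_of_bounded Metric.isBounded_closedBall
  refine tendsto_of_subseq_tendsto fun φ hφ => ?_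
  obtain ⟨η, -, ψ, hψ, hlim⟩ := hK.tendsto_subseq fun n =>
    subset_closure ⟨ξ (φ n), mem_closedBall_zero_iff.2 (hξ _), rfl⟩
  suffices η = 0 from ⟨ψ, this ▸ hlim⟩
  refine ext_inner_right 𝕜 fun ζ => tendsto_nhds_unique (hlim.inner tendsto_const_nhds) ?_
  simpa [ContinuousLinearMap.adjoint_inner_right, Function.comp_def] using
    (hweak (C.adjoint ζ)).comp (hφ.comp hψ.tendsto_atTop)

lemma ContinuousLinearMap.norm_apply_eq_of_star_mul_self_eq {a b : E →L[𝕜] E}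
    (h : star a * a = star b * b) (x : E) : ‖a x‖ = ‖b x‖ := by
  have hsq (c : E →L[𝕜] E) : ‖c x‖ ^ 2 = RCLike.re ⟪(star c * c) x, x⟫_𝕜 := by
    rw [c.apply_norm_sq_eq_inner_adjoint_left, star_eq_adjoint]
    rfl
  rw [← pow_left_inj₀ (norm_nonneg _) (norm_nonneg _) two_ne_zero, hsq, hsq, h]

lemma ContinuousLinearMap.inner_apply_apply_of_mul_eq_mul {K a b : E →L[𝕜] E}
    (h : K * a = b * K) (x y : E) : ⟪K (a x), b y⟫_𝕜 = ⟪(star b * b * K) x, y⟫_𝕜 := by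
  calc ⟪K (a x), b y⟫_𝕜 = ⟪star b ((K * a) x), y⟫_𝕜 := by
        rw [star_eq_adjoint, adjoint_inner_left]
        rfl
    _ = ⟪(star b * b * K) x, y⟫_𝕜 := by
        rw [h]
        rfl

end InnerProductSpace

namespace StandardForm

variable (sf : StandardForm M)

lemma norm_apply_Ω_le (x : H →L[ℂ] H) : ‖x sf.Ω‖ ≤ ‖x‖ := by
  simpa [sf.norm_Ω] using x.le_opNorm sf.Ω

lemma inner_apply_Ω_eq_trace (x y : H →L[ℂ] H) :
    ⟪x sf.Ω, y sf.Ω⟫_ℂ = SFtrace sf (star y * x) := by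
  rw [SFtrace, mul_apply_eq_comp, ContinuousLinearMap.star_eq_adjoint,
    ContinuousLinearMap.adjoint_inner_left]

lemma norm_apply_Ω_sq (x : H →L[ℂ] H) : ‖x sf.Ω‖ ^ 2 = (SFtrace sf (star x * x)).re := by
  rw [← inner_apply_Ω_eq_trace, inner_self_eq_norm_sq_to_K]
  simp [← Complex.ofReal_pow]

lemma inner_mul_apply_Ω {a x y : H →L[ℂ] H} (ha : a ∈ M) (hx : x ∈ M) (hy : y ∈ M) :
    ⟪a (x sf.Ω), y sf.Ω⟫_ℂ = ⟪a sf.Ω, (y * star x) sf.Ω⟫_ℂ := by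
  rw [← mul_apply_eq_comp, inner_apply_Ω_eq_trace, inner_apply_Ω_eq_trace, SFtrace, SFtrace,
    ← mul_assoc, sf.tracial _ (mul_mem (star_mem hy) ha) _ hx, star_mul, star_star, mul_assoc]

lemma norm_star_apply_Ω {x : H →L[ℂ] H} (hx : x ∈ M) : ‖star x sf.Ω‖ = ‖x sf.Ω‖ := by
  rw [← pow_left_inj₀ (norm_nonneg _) (norm_nonneg _) two_ne_zero, norm_apply_Ω_sq,
    norm_apply_Ω_sq, star_star, SFtrace, SFtrace, sf.tracial _ hx _ (star_mem hx)]

lemma norm_apply_apply_Ω_le {p z : H →L[ℂ] H} (hp : p ∈ M) (hpsa : IsSelfAdjoint p)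
    (hz : z ∈ M) : ‖p (z sf.Ω)‖ ≤ ‖z‖ * ‖p sf.Ω‖ := by
  calc ‖p (z sf.Ω)‖ = ‖(star z * p) sf.Ω‖ := by
        rw [← mul_apply_eq_comp, ← sf.norm_star_apply_Ω (mul_mem hp hz), star_mul,
          hpsa.star_eq]
    _ ≤ ‖z‖ * ‖p sf.Ω‖ := by
        simpa only [mul_apply_eq_comp, norm_star] using (star z).le_opNorm (p sf.Ω)

lemma trace_re_eq_norm_sq {p : H →L[ℂ] H} (hp : IsStarProjection p) :
    (SFtrace sf p).re = ‖p sf.Ω‖ ^ 2 := by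
  rw [norm_apply_Ω_sq, hp.isSelfAdjoint.star_eq, hp.isIdempotentElem.eq]

lemma eq_zero_of_inner_apply_Ω {T : H →L[ℂ] H}
    (h : ∀ x ∈ M, ∀ y ∈ M, ⟪T (x sf.Ω), y sf.Ω⟫_ℂ = 0) : T = 0 := by
  have hΩ : ∀ x ∈ M, T (x sf.Ω) = 0 := fun x hx =>
    sf.cyclic.eq_zero_of_inner_left (𝕜 := ℂ) (by rintro _ ⟨y, hy, rfl⟩; exact h x hx y hy)
  exact DFunLike.coe_injective <| Continuous.ext_on sf.cyclic T.continuous continuous_const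
    (by rintro _ ⟨x, hx, rfl⟩; exact hΩ x hx)

lemma norm_inner_apply_Ω_le {T C q a z : H →L[ℂ] H} (hq : q ∈ M) (hqp : IsStarProjection q)
    (ha : a ∈ M) (hz : z ∈ M) :
    ‖⟪T (a sf.Ω), z sf.Ω⟫_ℂ‖ ≤ 2 * ‖T‖ * ‖a‖ * ‖z‖ * ‖(1 - q) sf.Ω‖
      + ‖q * (T - C) * q‖ * ‖a‖ * ‖z‖ + ‖(q * C * q) (a sf.Ω)‖ * ‖z‖ := by
  set P : H →L[ℂ] H := 1 - q
  have hP : P ∈ M := sub_mem (one_mem M) hq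
  have hPsa : IsSelfAdjoint P := hqp.one_sub.isSelfAdjoint
  have hξ : ‖a sf.Ω‖ ≤ ‖a‖ := sf.norm_apply_Ω_le a
  have hζ : ‖z sf.Ω‖ ≤ ‖z‖ := sf.norm_apply_Ω_le z
  have hPξ := sf.norm_apply_apply_Ω_le hP hPsa ha
  have hPζ := sf.norm_apply_apply_Ω_le hP hPsa hz
  have hdecomp : T (a sf.Ω) = P (T (a sf.Ω)) + q (T (P (a sf.Ω)))
      + (q * (T - C) * q) (a sf.Ω) + (q * C * q) (a sf.Ω) := by
    simp only [P, mul_apply_eq_comp, sub_apply, one_apply_eq_self, map_sub]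
    abel
  have h₁ : ‖⟪P (T (a sf.Ω)), z sf.Ω⟫_ℂ‖ ≤ ‖T‖ * ‖a‖ * ‖z‖ * ‖P sf.Ω‖ := by
    calc _ = ‖⟪T (a sf.Ω), P (z sf.Ω)⟫_ℂ‖ := congrArg norm (hPsa.isSymmetric _ _)
      _ ≤ ‖T (a sf.Ω)‖ * ‖P (z sf.Ω)‖ := norm_inner_le_norm _ _
      _ ≤ (‖T‖ * ‖a‖) * (‖z‖ * ‖P sf.Ω‖) := by
          gcongr
          exact (T.le_opNorm _).trans (by gcongr)
      _ = _ := by ring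
  have h₂ : ‖⟪q (T (P (a sf.Ω))), z sf.Ω⟫_ℂ‖ ≤ ‖T‖ * ‖a‖ * ‖z‖ * ‖P sf.Ω‖ := by
    calc _ ≤ ‖q (T (P (a sf.Ω)))‖ * ‖z sf.Ω‖ := norm_inner_le_norm _ _
      _ ≤ (‖q‖ * (‖T‖ * (‖a‖ * ‖P sf.Ω‖))) * ‖z‖ := by
          gcongr
          exact (q.le_opNorm _).trans (by gcongr; exact (T.le_opNorm _).trans (by gcongr))
      _ ≤ (1 * (‖T‖ * (‖a‖ * ‖P sf.Ω‖))) * ‖z‖ := by gcongr; exact hqp.norm_le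
      _ = _ := by ring
  have h₃ : ‖⟪(q * (T - C) * q) (a sf.Ω), z sf.Ω⟫_ℂ‖ ≤ ‖q * (T - C) * q‖ * ‖a‖ * ‖z‖ :=
    (norm_inner_le_norm _ _).trans
      (by gcongr; exact ((q * (T - C) * q).le_opNorm _).trans (by gcongr))
  have h₄ : ‖⟪(q * C * q) (a sf.Ω), z sf.Ω⟫_ℂ‖ ≤ ‖(q * C * q) (a sf.Ω)‖ * ‖z‖ :=
    (norm_inner_le_norm _ _).trans (by gcongr)
  rw [hdecomp, inner_add_left, inner_add_left, inner_add_left]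
  refine (norm_add₄_le).trans ?_
  linarith

lemma tendsto_inner_apply_Ω_of_mem_qK {T : H →L[ℂ] H} (hT : T ∈ qK sf)
    {a z : ℕ → H →L[ℂ] H} {A Z : ℝ} (ha : ∀ n, a n ∈ M) (hz : ∀ n, z n ∈ M)
    (haA : ∀ n, ‖a n‖ ≤ A) (hzZ : ∀ n, ‖z n‖ ≤ Z)
    (hweak : ∀ η, Tendsto (fun n => ⟪a n sf.Ω, η⟫_ℂ) atTop (𝓝 0)) :
    Tendsto (fun n => ⟪T (a n sf.Ω), z n sf.Ω⟫_ℂ) atTop (𝓝 0) := by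
  obtain ⟨C, q, -, hC, -, hq, htr, hδ⟩ := hT
  have hA : 0 ≤ A := (norm_nonneg _).trans (haA 0)
  have hZ : 0 ≤ Z := (norm_nonneg _).trans (hzZ 0)
  have hqs (m : ℕ) : IsStarProjection (q m) := isProjection_iff_isStarProjection.mp (hq m).2
  have hs : Tendsto (fun m => ‖(1 - q m) sf.Ω‖) atTop (𝓝 0) := by
    simpa [sf.trace_re_eq_norm_sq (hqs _).one_sub] using htr.sqrt
  refine tendsto_zero_of_norm_le_add
    (a := fun m => 2 * ‖T‖ * A * Z * ‖(1 - q m) sf.Ω‖ + ‖q m * (T - C m) * q m‖ * A * Z)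
    (b := fun m n => ‖(q m * C m * q m) (a n sf.Ω)‖ * Z) (fun m n => ?_) ?_ fun m => ?_
  · have haAn := haA n
    have hzZn := hzZ n
    refine (sf.norm_inner_apply_Ω_le (C := C m) (hq m).1 (hqs m) (ha n) (hz n)).trans ?_
    gcongr
  · simpa using (hs.const_mul (2 * ‖T‖ * A * Z)).add ((hδ.mul_const A).mul_const Z)
  · have hcpt : IsCompactOperator (q m * C m * q m) := ((hC m).comp_clm (q m)).clm_comp (q m)
    simpa using ((hcpt.tendsto_apply_zero_of_weakly
      (fun n => (sf.norm_apply_Ω_le _).trans (haA n)) hweak).norm.mul_const Z)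

lemma tendsto_inner_pow_mul_apply_Ω {u e x : H →L[ℂ] H} (hu : u ∈ M) (hx : x ∈ M)
    (he : IsStarProjection e) (hue : star u * u = e) (heu : e * u = u)
    (hHaar : ∀ n : ℕ, 0 < n → SFtrace sf (u ^ n) = 0) (η : H) :
    Tendsto (fun n => ⟪(u ^ (n + 1) * x) sf.Ω, η⟫_ℂ) atTop (𝓝 0) := by
  have hiso := star_pow_mul_pow_eq_of_star_mul_eq hue heu
  have hlt (i k : ℕ) : ⟪(u ^ (i + 1 + (k + 1))) sf.Ω, (u ^ (i + 1)) sf.Ω⟫_ℂ = 0 := by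
    rw [inner_apply_Ω_eq_trace, star_pow_mul_pow_add_eq hue heu, hHaar _ k.succ_pos]
  have horth : Pairwise fun i j => ⟪(u ^ (i + 1)) sf.Ω, (u ^ (j + 1)) sf.Ω⟫_ℂ = 0 := by
    intro i j hij
    rcases hij.lt_or_gt with hij | hij
    · obtain ⟨k, rfl⟩ := Nat.exists_eq_add_of_lt hij
      rw [← inner_conj_symm, show i + k + 1 + 1 = i + 1 + (k + 1) by omega, hlt, map_zero]
    · obtain ⟨k, rfl⟩ := Nat.exists_eq_add_of_lt hij
      rw [show j + k + 1 + 1 = j + 1 + (k + 1) by omega, hlt]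
  have hpow := tendsto_inner_zero_of_orthogonal (c := ‖u sf.Ω‖)
    (fun n => ContinuousLinearMap.norm_apply_eq_of_star_mul_self_eq (by rw [hiso, hue]) _) horth
  refine tendsto_inner_zero_of_dense (R := ‖x‖) (fun n => ?_) sf.cyclic ?_ η
  · exact (sf.norm_apply_Ω_le _).trans (norm_pow_succ_mul_le he hue heu n x)
  · rintro _ ⟨y, hy, rfl⟩
    simpa only [mul_apply_eq_comp, sf.inner_mul_apply_Ω (pow_mem hu _) hx hy] using
      hpow ((y * star x) sf.Ω)

end StandardForm

theorem qK_no_intertwining_general (sf : StandardForm M)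
    (e f : H →L[ℂ] H)
    (hep : IsProjection e) (hfp : IsProjection f)
    (B : Set (H →L[ℂ] H)) (hBM : B ⊆ (M : Set (H →L[ℂ] H)))
    (hBe : ∀ b ∈ B, e * b * e = b) (heB : e ∈ B)
    (hBstar : ∀ b ∈ B, star b ∈ B)
    (hdiffuse : ∃ u ∈ B, star u * u = e ∧ u * star u = e ∧
      ∀ n : ℕ, 0 < n → SFtrace sf (u ^ n) = 0)
    (σ : (H →L[ℂ] H) → (H →L[ℂ] H))
    (hσM : ∀ b ∈ B, σ b ∈ M) (hσf : ∀ b ∈ B, f * σ b * f = σ b)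
    (hσmul : ∀ a ∈ B, ∀ b ∈ B, σ (a * b) = σ a * σ b)
    (hσstar : ∀ b ∈ B, σ (star b) = star (σ b))
    (hσe : σ e = f)
    (K : H →L[ℂ] H) (hK : K ∈ qK sf)
    (hcomm : ∀ b ∈ B, K * b = σ b * K) :
    K = (1 - f) * K * (1 - e) := by
  obtain ⟨u, huB, hue, -, hHaar⟩ := hdiffuse
  have he := isProjection_iff_isStarProjection.mp hep
  have hf := isProjection_iff_isStarProjection.mp hfp
  have heu : e * u = u := he.isIdempotentElem.mul_eq_of_mul_mul_eq (hBe u huB)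
  have hfw : f * σ u = σ u := hf.isIdempotentElem.mul_eq_of_mul_mul_eq (hσf u huB)
  have hwf : star (σ u) * σ u = f := by
    rw [← hσstar u huB, ← hσmul _ (hBstar u huB) _ huB, hue, hσe]
  have hKu (n : ℕ) : K * u ^ n = σ u ^ n * K :=
    (SemiconjBy.pow_right (hcomm u huB) n).eq
  have hfK : f * K = 0 := sf.eq_zero_of_inner_apply_Ω fun x hx y hy => by
    have hconst (n : ℕ) : ⟪(f * K) (x sf.Ω), y sf.Ω⟫_ℂ
        = ⟪K ((u ^ (n + 1) * x) sf.Ω), (σ u ^ (n + 1) * y) sf.Ω⟫_ℂ := by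
      rw [mul_apply_eq_comp (u ^ (n + 1)), mul_apply_eq_comp (σ u ^ (n + 1)),
        ContinuousLinearMap.inner_apply_apply_of_mul_eq_mul (hKu _),
        star_pow_mul_pow_eq_of_star_mul_eq hwf hfw]
    exact tendsto_nhds_unique (tendsto_const_nhds.congr hconst)
      (sf.tendsto_inner_apply_Ω_of_mem_qK hK (fun n => mul_mem (pow_mem (hBM huB) _) hx)
        (fun n => mul_mem (pow_mem (hσM u huB) _) hy) (norm_pow_succ_mul_le he hue heu · x)
        (norm_pow_succ_mul_le hf hwf hfw · y)
        (sf.tendsto_inner_pow_mul_apply_Ω (hBM huB) hx he hue heu hHaar))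
  have hKe : K * e = 0 := by rw [hcomm e heB, hσe, hfK]
  rw [sub_mul, one_mul, hfK, sub_zero, mul_sub, mul_one, hKe, sub_zero]

/-- Let `B ⊆ eMe` be a diffuse von Neumann subalgebra (diffuseness
witnessed, equivalently, by a Haar unitary `u ∈ B`: `u^*u = uu^* = e` and `τ(uⁿ) = 0`
for `n ≥ 1`) and `σ : B → fMf` a unital faithful `*`-homomorphism, for nonzero
projections `e, f ∈ M`. If `K ∈ qK_M` satisfies `Kb = σ(b)K` for all `b ∈ B`, then
`K = (1-f)K(1-e)`. -/
theorem qK_no_intertwining (sf : StandardForm M)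
    (e f : H →L[ℂ] H) (he : e ∈ M) (hf : f ∈ M)
    (hep : IsProjection e) (hfp : IsProjection f) (he0 : e ≠ 0) (hf0 : f ≠ 0)
    (B : Set (H →L[ℂ] H)) (hBM : B ⊆ (M : Set (H →L[ℂ] H)))
    (hBe : ∀ b ∈ B, e * b * e = b) (heB : e ∈ B)
    (hBadd : ∀ a ∈ B, ∀ b ∈ B, a + b ∈ B)
    (hBmul : ∀ a ∈ B, ∀ b ∈ B, a * b ∈ B)
    (hBstar : ∀ b ∈ B, star b ∈ B)
    (hBsmul : ∀ (c : ℂ), ∀ b ∈ B, c • b ∈ B)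
    (hdiffuse : ∃ u ∈ B, star u * u = e ∧ u * star u = e ∧
      ∀ n : ℕ, 0 < n → SFtrace sf (u ^ n) = 0)
    (σ : (H →L[ℂ] H) → (H →L[ℂ] H))
    (hσM : ∀ b ∈ B, σ b ∈ M) (hσf : ∀ b ∈ B, f * σ b * f = σ b)
    (hσadd : ∀ a ∈ B, ∀ b ∈ B, σ (a + b) = σ a + σ b)
    (hσmul : ∀ a ∈ B, ∀ b ∈ B, σ (a * b) = σ a * σ b)
    (hσstar : ∀ b ∈ B, σ (star b) = star (σ b))
    (hσsmul : ∀ (c : ℂ), ∀ b ∈ B, σ (c • b) = c • σ b)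
    (hσe : σ e = f)
    (hσfaithful : ∀ b ∈ B, σ b = 0 → b = 0)
    (K : H →L[ℂ] H) (hK : K ∈ qK sf)
    (hcomm : ∀ b ∈ B, K * b = σ b * K) :
    K = (1 - f) * K * (1 - e) :=
  qK_no_intertwining_general sf e f hep hfp B hBM hBe heB hBstar hdiffuse σ hσM hσf hσmul hσstar hσe
    K hK hcomm
end
end
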